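/- arXiv:math/0206074 — 7 statements merged into one kernel-verified Lean document; each statement's English description precedes it below -/
import Mathlib

section
/- If A is a closed unital *-subalgebra of C(X) for a compact Hausdorff space X, and R_A is the equivalence relation on X defined by (x,y) ∈ R_A iff f(x) = f(y) for all f ∈ A, then every function in A is constant on each R_A-equivalence class, and conversely every continuous function on X that is constant on each R_A-equivalence class belongs to A. -/
/-- For a closed unital *-subalgebra `A ⊆ C(X, ℂ)` on a compact
Hausdorff space `X`, a continuous function belongs to `A` iff it is constant on
each equivalence class of the relation `R_A` defined by
`(x, y) ∈ R_A ↔ ∀ f ∈ A, f x = f y`. -/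
theorem stmt0 {X : Type*} [TopologicalSpace X] [CompactSpace X] [T2Space X]
    (A : StarSubalgebra ℂ C(X, ℂ)) (hclosed : IsClosed (A : Set C(X, ℂ))) :
    ∀ g : C(X, ℂ), g ∈ A ↔ ∀ x y : X, (∀ f ∈ A, f x = f y) → g x = g y := by
  intro g
  constructor
  · intro hg x y h
    exact h g hg
  · intro hg
    letI s : Setoid X :=
      ⟨fun x y => ∀ f ∈ A, f x = f y,
        ⟨fun _ _ _ => rfl, fun h f hf => (h f hf).symm,
          fun h1 h2 f hf => (h1 f hf).trans (h2 f hf)⟩⟩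
    let Y := Quotient s
    let q : C(X, Y) := ⟨Quotient.mk s, continuous_quot_mk⟩
    -- descend every element of A to the quotient
    have desc : ∀ f : C(X, ℂ), f ∈ A → ∃ f' : C(Y, ℂ), f'.comp q = f := by
      intro f hf
      refine ⟨⟨Quotient.lift f (fun a b hab => hab f hf),
        f.continuous.quotient_lift _⟩, ?_⟩
      ext x
      rfl
    haveI : T2Space Y := by
      constructor
      intro x y hxy
      obtain ⟨a, rfl⟩ := Quotient.exists_rep x
      obtain ⟨b, rfl⟩ := Quotient.exists_rep y
      have hab : ¬ (∀ f ∈ A, f a = f b) := fun h => hxy (Quotient.sound h)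
      push_neg at hab
      obtain ⟨f, hf, hne⟩ := hab
      obtain ⟨f', hf'⟩ := desc f hf
      have : f' ⟦a⟧ ≠ f' ⟦b⟧ := by
        have ha : f' ⟦a⟧ = f a := by rw [← hf']; rfl
        have hb : f' ⟦b⟧ = f b := by rw [← hf']; rfl
        rw [ha, hb]; exact hne
      exact separated_by_continuous f'.continuous this
    let Φ : C(Y, ℂ) →⋆ₐ[ℂ] C(X, ℂ) := q.compStarAlgHom' ℂ ℂ
    let B : StarSubalgebra ℂ C(Y, ℂ) := A.comap Φ
    have hsep : B.SeparatesPoints := by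
      intro x y hxy
      obtain ⟨a, rfl⟩ := Quotient.exists_rep x
      obtain ⟨b, rfl⟩ := Quotient.exists_rep y
      have hab : ¬ (∀ f ∈ A, f a = f b) := fun h => hxy (Quotient.sound h)
      push_neg at hab
      obtain ⟨f, hf, hne⟩ := hab
      obtain ⟨f', hf'⟩ := desc f hf
      refine ⟨_, ⟨f', ?_, rfl⟩, ?_⟩
      · show f' ∈ B
        show Φ f' ∈ A
        show f'.comp q ∈ A
        rw [hf']; exact hf
      · have ha : f' ⟦a⟧ = f a := by rw [← hf']; rfl
        have hb : f' ⟦b⟧ = f b := by rw [← hf']; rfl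
        simpa [ha, hb] using hne
    have htop : B.topologicalClosure = ⊤ :=
      ContinuousMap.starSubalgebra_topologicalClosure_eq_top_of_separatesPoints B hsep
    -- descend g
    have hg' : ∃ g' : C(Y, ℂ), g'.comp q = g := by
      refine ⟨⟨Quotient.lift g (fun a b hab => hg a b hab), g.continuous.quotient_lift _⟩, ?_⟩
      ext x; rfl
    obtain ⟨g', hgq⟩ := hg'
    have hmem : g' ∈ B.topologicalClosure := htop ▸ trivial
    have hcl : g' ∈ closure (B : Set C(Y, ℂ)) := hmem
    have : Φ g' ∈ closure (Φ '' (B : Set C(Y, ℂ))) :=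
      (image_closure_subset_closure_image (ContinuousMap.continuous_precomp q)) ⟨g', hcl, rfl⟩
    have himg : Φ '' (B : Set C(Y, ℂ)) ⊆ (A : Set C(X, ℂ))  := by
      rintro _ ⟨f', hf', rfl⟩
      exact hf'
    have : Φ g' ∈ (A : Set C(X, ℂ)) :=
      hclosed.closure_subset ((closure_mono himg).trans
        (by rw [hclosed.closure_eq]) this)
    simpa [Φ, hgq] using this
end

section
/- Let X be a compact Hausdorff space, R a proper equivalence relation on X (i.e. the quotient X/R is Hausdorff) which is open (the saturation of each open set is open), and h : X → ℝ continuous. Then the set M_h^R of conditional minimum points of h, i.e. the set of x ∈ X such that h(x) ≤ h(y) for all y with (x,y) ∈ R, is closed in X. -/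
namespace Setoid

variable {X : Type*} [TopologicalSpace X] {s : Setoid X}

theorem isOpen_setOf_exists_rel_and_mem (hs : IsOpenMap (Quotient.mk s)) {W : Set (X × X)}
    (hW : IsOpen W) : IsOpen {x | ∃ y, s.r x y ∧ (x, y) ∈ W} := by
  refine isOpen_iff_forall_mem_open.mpr fun x ⟨y, hxy, hxyW⟩ => ?_
  obtain ⟨U, V, hU, hV, hxU, hyV, hUV⟩ := isOpen_prod_iff.mp hW x y hxyW
  -- A box `U ×ˢ V ⊆ W` around `(x, y)` gives the neighbourhood `U ∩ π⁻¹ (π V)` of `x`,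
  -- open because `π` is an open map.
  refine ⟨U ∩ Quotient.mk s ⁻¹' (Quotient.mk s '' V), ?_, ?_, hxU,
    y, hyV, Quotient.sound (s.symm hxy)⟩
  · rintro z ⟨hzU, v, hvV, hvz⟩
    exact ⟨v, Quotient.exact hvz.symm, hUV ⟨hzU, hvV⟩⟩
  · exact hU.inter ((hs V hV).preimage continuous_quotient_mk')

theorem isClosed_setOf_forall_rel_le {α : Type*} [LinearOrder α] [TopologicalSpace α]
    [OrderClosedTopology α] (hs : IsOpenMap (Quotient.mk s)) {h : X → α} (hh : Continuous h) :
    IsClosed {x | ∀ y, s.r x y → h x ≤ h y} := by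
  have hopen := isOpen_setOf_exists_rel_and_mem hs
    (isOpen_lt (hh.comp continuous_snd) (hh.comp continuous_fst))
  convert hopen.isClosed_compl using 1
  ext x
  simp only [Set.mem_ofPred_eq, Function.comp_apply, Set.mem_compl_iff, not_exists, not_and, not_lt]

end Setoid

theorem stmt1_general {X : Type*} [TopologicalSpace X]
    (s : Setoid X)
    (hopen : IsOpenMap (Quotient.mk s))
    (h : X → ℝ) (hcont : Continuous h) :
    IsClosed {x : X | ∀ y : X, s.r x y → h x ≤ h y} :=
  Setoid.isClosed_setOf_forall_rel_le hopen hcont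

/-- If `R` is an open proper equivalence relation on a compact
Hausdorff space `X` (the quotient is Hausdorff and the quotient map is open)
and `h : X → ℝ` is continuous, then the set of conditional minimum points
`M_h^R = {x | ∀ y, x ~ y → h x ≤ h y}` is closed. -/
theorem stmt1 {X : Type*} [TopologicalSpace X] [CompactSpace X]
    (s : Setoid X)
    (hHausdorff : T2Space (Quotient s))
    (hopen : IsOpenMap (Quotient.mk s))
    (h : X → ℝ) (hcont : Continuous h) :
    IsClosed {x : X | ∀ y : X, s.r x y → h x ≤ h y} :=
  stmt1_general s hopen h hcont
end

section
/- Let E : A → B be a conditional expectation from a unital ring (or C*-algebra) A onto a subring B with a finite quasi-basis {u_1,…,u_k} (meaning a = ∑_i u_i E(u_i* a) for all a ∈ A). If C ⊆ A is a subalgebra with E(C) ⊆ C that is invariant in the sense that the restriction E|_C maps C onto B∩C, and F : A → C is another conditional expectation commuting appropriately, then {F(u_1),…,F(u_k)} satisfies c = ∑_i F(u_i) E(F(u_i)* c) for all c ∈ C whenever E ∘ F = E and F is a *-preserving B-bimodule idempotent onto C. In particular, if E_m : A → R_m is of index-finite type with quasi-basis {u_1,…,u_k} and E_n : A → R_n is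 a conditional expectation with R_m ⊆ R_n and E_m ∘ E_n = E_m, then {E_n(u_1),…,E_n(u_k)} is a quasi-basis for the restriction of E_m to R_n. -/
/-- Proposition: restriction of a finite-index conditional
expectation: let `A` be a unital *-algebra, `R_m ⊆ R_n ⊆ A` unital
*-subalgebras, `E_m : A → R_m`, `E_n : A → R_n` conditional expectations with
`E_m ∘ E_n = E_m`.  If `{u_1, …, u_k}` is a quasi-basis for `E_m`
(`a = ∑ i, u_i * E_m (u_i^* * a)` for all `a`), then `{E_n u_1, …, E_n u_k}`
is a quasi-basis for the restriction of `E_m` to `R_n`: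
`c = ∑ i, E_n u_i * E_m ((E_n u_i)^* * c)` for all `c ∈ R_n`. -/
theorem stmt8 {A : Type*} [Ring A] [StarRing A]
    (Rm Rn : Subring A) (hsub : Rm ≤ Rn)
    (hRmstar : ∀ a ∈ Rm, star a ∈ Rm) (hRnstar : ∀ a ∈ Rn, star a ∈ Rn)
    (Em En : A →+ A)
    (hEmRange : ∀ a, Em a ∈ Rm) (hEnRange : ∀ a, En a ∈ Rn)
    (hEmId : ∀ a ∈ Rm, Em a = a) (hEnId : ∀ a ∈ Rn, En a = a)
    (hEmBimod : ∀ a : A, ∀ r ∈ Rm, Em (r * a) = r * Em a ∧ Em (a * r) = Em a * r)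
    (hEnBimod : ∀ a : A, ∀ r ∈ Rn, En (r * a) = r * En a ∧ En (a * r) = En a * r)
    (hEmStar : ∀ a, Em (star a) = star (Em a))
    (hEnStar : ∀ a, En (star a) = star (En a))
    (hcomp : ∀ a, Em (En a) = Em a)
    (k : ℕ) (u : Fin k → A)
    (hqb : ∀ a : A, a = ∑ i, u i * Em (star (u i) * a)) :
    ∀ c ∈ Rn, c = ∑ i, En (u i) * Em (star (En (u i)) * c) := by
  intro c hc
  have key : ∀ i : Fin k, Em (star (En (u i)) * c) = Em (star (u i) * c) := by
    intro i
    rw [← hEnStar, ← (hEnBimod (star (u i)) c hc).2, hcomp]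
  calc c = En c := (hEnId c hc).symm
    _ = En (∑ i, u i * Em (star (u i) * c)) := by rw [← hqb c]
    _ = ∑ i, En (u i * Em (star (u i) * c)) := map_sum En _ _
    _ = ∑ i, En (u i) * Em (star (En (u i)) * c) := by
        refine Finset.sum_congr rfl fun i _ => ?_
        rw [key, (hEnBimod (u i) (Em (star (u i) * c)) (hsub (hEmRange _))).2]
end

section
/- Let F_n (n ∈ ℕ) be linear operators on a C*-algebra A defined by F_n(a) = Λ^{-[n]} E_n(Λ^{[n]} a), where Λ^{[n]} = Λ_0 Λ_1 ⋯ Λ_{n-1} with each Λ_i a central invertible positive element of R_i, and E_n : A → R_n conditional expectations with E_{n+1} ∘ E_n = E_{n+1}. Then F_{n+1} ∘ F_n = F_{n+1} for all n. Consequently, if a state φ on A satisfies φ ∘ F_{k+1} = φ, then φ ∘ F_k = φ. -/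
open ComplexOrder

/-- with `F_n a = Λ^{-[n]} E_n (Λ^{[n]} a)` for central positive
invertible `Λ_i ∈ R_i` and conditional expectations `E_n : A → R_n` with
`E_{n+1} ∘ E_n = E_{n+1}`, one has `F_{n+1} ∘ F_n = F_{n+1}`; consequently a
state invariant under `F_{k+1}` is invariant under `F_k`. -/
theorem stmt10 {A : Type*} [NormedRing A] [StarRing A] [CStarRing A]
    [NormedAlgebra ℂ A] [StarModule ℂ A] [CompleteSpace A] [PartialOrder A] [StarOrderedRing A]
    (R : ℕ → StarSubalgebra ℂ A) (hdec : ∀ n, R (n + 1) ≤ R n)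
    (E : ℕ → (A →ₗ[ℂ] A))
    (hERange : ∀ n a, E n a ∈ R n)
    (hEId : ∀ n, ∀ a ∈ R n, E n a = a)
    (hEBimod : ∀ n (a : A), ∀ r ∈ R n,
      E n (r * a) = r * E n a ∧ E n (a * r) = E n a * r)
    (hEcomp : ∀ n a, E (n + 1) (E n a) = E (n + 1) a)
    (Λ : ℕ → Aˣ)
    (hΛmem : ∀ n, (Λ n : A) ∈ R n)
    (hΛpos : ∀ n, (0 : A) ≤ (Λ n : A))
    (hΛcentral : ∀ n, ∀ r ∈ R n, (Λ n : A) * r = r * (Λ n : A))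
    (F : ℕ → A → A)
    (hF : ∀ n a, F n a =
      (((((List.range n).map Λ).prod)⁻¹ : Aˣ) : A) *
        E n (((((List.range n).map Λ).prod : Aˣ) : A) * a)) :
    (∀ n a, F (n + 1) (F n a) = F (n + 1) a) ∧
    (∀ (k : ℕ) (φ : A →ₗ[ℂ] ℂ),
      (∀ a, 0 ≤ φ (star a * a)) → (∀ a, φ (F (k + 1) a) = φ a) →
        ∀ a, φ (F k a) = φ a) := by
  have hle : ∀ i j : ℕ, i ≤ j → R j ≤ R i := by
    intro i j h
    induction h with
    | refl => exact le_rfl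
    | step _ ih => exact le_trans (hdec _) ih
  have hcomm : ∀ n m : ℕ, n ≤ m →
      ((((List.range n).map Λ).prod : Aˣ) : A) * (Λ m : A)
        = (Λ m : A) * ((((List.range n).map Λ).prod : Aˣ) : A) := by
    intro n
    induction n with
    | zero => intro m _; simp
    | succ n ih =>
      intro m hm
      have h1 : (Λ n : A) * (Λ m : A) = (Λ m : A) * (Λ n : A) :=
        hΛcentral n (Λ m : A) (hle n m (Nat.le_of_succ_le hm) (hΛmem m))
      have h2 := ih m (Nat.le_of_succ_le hm)
      simp only [List.range_succ, List.map_append, List.prod_append, List.map_cons,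
        List.map_nil, List.prod_cons, List.prod_nil, mul_one, Units.val_mul]
      rw [mul_assoc, h1, ← mul_assoc, h2, mul_assoc]
  have key : ∀ n a, F (n + 1) (F n a) = F (n + 1) a := by
    intro n a
    set P : Aˣ := ((List.range n).map Λ).prod with hP
    have hP' : (((List.range (n + 1)).map Λ).prod : Aˣ) = P * Λ n := by
      simp [List.range_succ, hP]
    have hc : (P : A) * (Λ n : A) = (Λ n : A) * (P : A) := hcomm n n le_rfl
    rw [hF, hF, hF, hP']
    congr 1
    have step1 : ((P * Λ n : Aˣ) : A) * (((P⁻¹ : Aˣ) : A) * E n ((P : A) * a))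
        = E n ((Λ n : A) * ((P : A) * a)) := by
      rw [(hEBimod n ((P : A) * a) (Λ n : A) (hΛmem n)).1, Units.val_mul, hc,
        mul_assoc, ← mul_assoc (P : A), Units.mul_inv, one_mul]
    rw [step1, hEcomp]
    congr 1
    rw [Units.val_mul, ← mul_assoc, ← hc]
  refine ⟨key, ?_⟩
  intro k φ _ hinv a
  calc φ (F k a) = φ (F (k + 1) (F k a)) := (hinv _).symm
    _ = φ (F (k + 1) a) := by rw [key]
    _ = φ a := hinv a
end

section
/- Let R be a proper open equivalence relation on a compact Hausdorff space X whose quotient map π is a covering map, p : X → (0,∞) continuous with ∑_{(y,x)∈R} p(y) = 1 (sum over the R-class of x), h : X → (0,∞) continuous, and define E^β(f) = h^β · E(h^{-β} f) where E(f)(x) = ∑_{(y,x)∈R} p(y) f(y). For a Borel probability measure μ on X supported in M_h^R = {x : ∀y, (x,y)∈R → h(x) ≤ h(y)}, one has |∫_X f · E^β(g) dμ| ≤ ‖f‖_∞ ‖g‖_∞ for all continuous f, g and all β ≥ 0. -/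
open MeasureTheory

/-! At a conditional minimum point `x` of `h` every weight `h x ^ β * h y ^ (-β)` with `y ~ x`
lies in `[0, 1]` when `β ≥ 0`, so `E^β g x` is a convex combination of numbers of modulus at
most `‖g‖`. Hence `|f · E^β g| ≤ ‖f‖ ‖g‖` holds `μ`-almost everywhere, and integrating against
the probability measure `μ` gives the bound. -/

lemma Real.rpow_mul_rpow_neg_le_one {a b β : ℝ} (ha : 0 ≤ a) (hab : a ≤ b) (hβ : 0 ≤ β) :
    a ^ β * b ^ (-β) ≤ 1 := by
  have hb : 0 ≤ b := ha.trans hab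
  rw [Real.rpow_neg hb, ← div_eq_mul_inv]
  exact div_le_one_of_le₀ (Real.rpow_le_rpow ha hab hβ) (Real.rpow_nonneg hb β)

lemma abs_finsum_mem_mul_le_of_finsum_mem_eq_one {ι : Type*} {S : Set ι} (hS : S.Finite)
    {p c : ι → ℝ} {C : ℝ} (hp : ∀ y ∈ S, 0 ≤ p y) (hp1 : ∑ᶠ y ∈ S, p y = 1)
    (hc : ∀ y ∈ S, |c y| ≤ C) :
    |∑ᶠ y ∈ S, p y * c y| ≤ C := by
  obtain ⟨t, rfl⟩ := hS.exists_finset_coe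
  rw [finsum_mem_coe_finset] at hp1 ⊢
  calc |∑ y ∈ t, p y * c y|
      ≤ ∑ y ∈ t, |p y * c y| := Finset.abs_sum_le_sum_abs _ _
    _ ≤ ∑ y ∈ t, p y * C := Finset.sum_le_sum fun y hy => by
        rw [abs_mul, abs_of_nonneg (hp y hy)]
        exact mul_le_mul_of_nonneg_left (hc y hy) (hp y hy)
    _ = C := by rw [← Finset.sum_mul, hp1, one_mul]

lemma abs_rpow_mul_finsum_mem_rpow_neg_le {ι : Type*} {S : Set ι} (hS : S.Finite)
    {p h g : ι → ℝ} {x : ι} {β C : ℝ} (hp : ∀ y ∈ S, 0 ≤ p y) (hp1 : ∑ᶠ y ∈ S, p y = 1)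
    (hx : 0 ≤ h x) (hmin : ∀ y ∈ S, h x ≤ h y) (hβ : 0 ≤ β) (hg : ∀ y ∈ S, |g y| ≤ C) :
    |h x ^ β * ∑ᶠ y ∈ S, p y * (h y ^ (-β) * g y)| ≤ C := by
  have hweights : ∀ y ∈ S, h x ^ β * (p y * (h y ^ (-β) * g y))
      = p y * ((h x ^ β * h y ^ (-β)) * g y) := fun _ _ => by ring
  rw [mul_finsum_mem, finsum_mem_congr rfl hweights]
  refine abs_finsum_mem_mul_le_of_finsum_mem_eq_one hS hp hp1 fun y hy => ?_
  have hw_nonneg : 0 ≤ h x ^ β * h y ^ (-β) :=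
    mul_nonneg (Real.rpow_nonneg hx β) (Real.rpow_nonneg (hx.trans (hmin y hy)) _)
  have hw_le_one := Real.rpow_mul_rpow_neg_le_one hx (hmin y hy) hβ
  rw [abs_mul, abs_of_nonneg hw_nonneg]
  exact (mul_le_of_le_one_left (abs_nonneg _) hw_le_one).trans (hg y hy)

theorem stmt14_general {X : Type*} [TopologicalSpace X] [CompactSpace X]
    [MeasurableSpace X]
    (s : Setoid X)
    (hfin : ∀ x : X, {y : X | s.r y x}.Finite)
    (p : X → ℝ) (hppos : ∀ x, 0 < p x)
    (hpnorm : ∀ x : X, ∑ᶠ y ∈ {y : X | s.r y x}, p y = 1)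
    (h : X → ℝ) (hhpos : ∀ x, 0 < h x)
    (μ : Measure X) [IsProbabilityMeasure μ]
    (hsupp : μ {x : X | ∀ y : X, s.r x y → h x ≤ h y}ᶜ = 0)
    (f g : C(X, ℝ)) :
    ∀ β : ℝ, 0 ≤ β →
      |∫ x, f x *
          (h x ^ β * ∑ᶠ y ∈ {y : X | s.r y x}, p y * (h y ^ (-β) * g y)) ∂μ| ≤
        ‖f‖ * ‖g‖ := by
  intro β hβ
  have hmin : ∀ᵐ x ∂μ, ∀ y : X, s.r x y → h x ≤ h y := ae_iff.mpr hsupp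
  have hbound : ∀ᵐ x ∂μ,
      ‖f x * (h x ^ β * ∑ᶠ y ∈ {y : X | s.r y x}, p y * (h y ^ (-β) * g y))‖
        ≤ ‖f‖ * ‖g‖ := by
    filter_upwards [hmin] with x hx
    have hEg : |h x ^ β * ∑ᶠ y ∈ {y : X | s.r y x}, p y * (h y ^ (-β) * g y)| ≤ ‖g‖ :=
      abs_rpow_mul_finsum_mem_rpow_neg_le (hfin x) (fun y _ => (hppos y).le) (hpnorm x)
        (hhpos x).le (fun y hy => hx y (s.symm hy)) hβ (fun y _ => g.norm_coe_le_norm y)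
    rw [norm_mul]
    exact mul_le_mul (f.norm_coe_le_norm x) hEg (abs_nonneg _) (norm_nonneg f)
  simpa using norm_integral_le_of_norm_le_const hbound

/-- for a proper equivalence relation `R` with covering quotient
map, `E(f)(x) = ∑_{y ~ x} p y f y` and `E^β(f) = h^β E(h^{-β} f)`, if `μ` is a
probability measure supported in the set of conditional minimum points of `h`,
then `|∫ f · E^β g dμ| ≤ ‖f‖ ‖g‖` for all continuous `f, g` and all `β ≥ 0`. -/
theorem stmt14 {X : Type*} [TopologicalSpace X] [CompactSpace X] [T2Space X]
    [MeasurableSpace X] [BorelSpace X]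
    (s : Setoid X)
    (hcover : IsCoveringMap (Quotient.mk s))
    (hfin : ∀ x : X, {y : X | s.r y x}.Finite)
    (p : X → ℝ) (hpcont : Continuous p) (hppos : ∀ x, 0 < p x)
    (hpnorm : ∀ x : X, ∑ᶠ y ∈ {y : X | s.r y x}, p y = 1)
    (h : X → ℝ) (hhcont : Continuous h) (hhpos : ∀ x, 0 < h x)
    (μ : Measure X) [IsProbabilityMeasure μ]
    (hsupp : μ {x : X | ∀ y : X, s.r x y → h x ≤ h y}ᶜ = 0)
    (f g : C(X, ℝ)) :
    ∀ β : ℝ, 0 ≤ β →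
      |∫ x, f x *
          (h x ^ β * ∑ᶠ y ∈ {y : X | s.r y x}, p y * (h y ^ (-β) * g y)) ∂μ| ≤
        ‖f‖ * ‖g‖ :=
  stmt14_general s hfin p hppos hpnorm h hhpos μ hsupp f g
end

section
/- With X, R, p, h, E, E^β as above, if μ is a Borel probability measure such that sup_{β ≥ 0} ∫_X E^β(1) dμ < ∞, then the support of μ is contained in M_h^R = {x : ∀y, (x,y)∈R → h(x) ≤ h(y)}. -/
/-!
Suppose `x₀` has an equivalent point `y₀` with `h y₀ < h x₀`. A local inverse of the covering
map through `y₀` transports every `z` near `x₀` to an equivalent point `τ z`, with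
`h z / h (τ z) > c > 1` and `p (τ z) > p y₀ / 2`. Keeping only that term of the fibre sum gives
`E^β(1) z ≥ (p y₀ / 2) c ^ β` near `x₀`, so by Markov's inequality the mass of that
neighbourhood is at most `K c ^ (-β) / (p y₀ / 2)` for every `β ≥ 0`, hence zero.
-/

open MeasureTheory Set Filter Topology

theorem Bundle.Trivialization.finsum_mem_preimage_singleton {E B F M : Type*}
    [TopologicalSpace E] [TopologicalSpace B] [TopologicalSpace F] [AddCommMonoid M]
    {f : E → B} (t : Trivialization F f) {b : B} (hb : b ∈ t.baseSet) (q : E → M) :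
    ∑ᶠ e ∈ f ⁻¹' {b}, q e = ∑ᶠ i : F, q (t.toOpenPartialHomeomorph.symm (b, i)) := by
  rw [← finsum_set_coe_eq_finsum_mem,
    ← finsum_comp_equiv (t.preimageSingletonHomeomorph hb).symm.toEquiv]
  rfl

theorem IsCoveringMap.continuousAt_finsum_fiber {E B M : Type*} [TopologicalSpace E]
    [TopologicalSpace B] [AddCommMonoid M] [TopologicalSpace M] [ContinuousAdd M]
    {f : E → B} (hf : IsCoveringMap f) {b : B} (hne : (f ⁻¹' {b}).Nonempty)
    (hfin : (f ⁻¹' {b}).Finite) {q : E → M} (hq : Continuous q) :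
    ContinuousAt (fun b' => ∑ᶠ e ∈ f ⁻¹' {b'}, q e) b := by
  have := hne.to_subtype
  have := hfin.fintype
  set t := (hf b).toTrivialization
  have hb : b ∈ t.baseSet := (hf b).mem_toTrivialization_baseSet
  have hsum : (fun b' => ∑ i, q (t.toOpenPartialHomeomorph.symm (b', i))) =ᶠ[𝓝 b]
      fun b' => ∑ᶠ e ∈ f ⁻¹' {b'}, q e := by
    filter_upwards [t.open_baseSet.mem_nhds hb] with b' hb'
    rw [t.finsum_mem_preimage_singleton hb', finsum_eq_sum_of_fintype]
  exact ContinuousAt.congr (tendsto_finsetSum _ fun i _ =>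
    hq.continuousAt.comp (t.continuousAt_symm_prodMk_left hb)) hsum

theorem IsLocalHomeomorph.exists_fiber_preserving_continuousAt {E B : Type*}
    [TopologicalSpace E] [TopologicalSpace B] {f : E → B} (hf : IsLocalHomeomorph f)
    {x₀ y₀ : E} (hxy : f x₀ = f y₀) :
    ∃ τ : E → E, ContinuousAt τ x₀ ∧ τ x₀ = y₀ ∧ ∀ᶠ z in 𝓝 x₀, f (τ z) = f z := by
  obtain ⟨e, hy₀, rfl⟩ := hf y₀
  refine ⟨e.symm ∘ e, ?_, by simp [hxy, e.left_inv hy₀], ?_⟩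
  · exact (e.continuousAt_symm (hxy ▸ e.map_source hy₀)).comp hf.continuous.continuousAt
  · exact hf.continuous.continuousAt.eventually
      (e.eventually_right_inverse (hxy ▸ e.map_source hy₀))

theorem Setoid.setOf_rel_eq_preimage_mk {X : Type*} (s : Setoid X) (x : X) :
    {y | s.r y x} = Quotient.mk s ⁻¹' {Quotient.mk s x} := by
  ext y
  exact Quotient.eq.symm

theorem IsCoveringMap.continuous_finsum_setOf_rel {X M : Type*} [TopologicalSpace X]
    [AddCommMonoid M] [TopologicalSpace M] [ContinuousAdd M] {s : Setoid X}
    (hs : IsCoveringMap (Quotient.mk s)) (hfin : ∀ x, {y | s.r y x}.Finite) {q : X → M}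
    (hq : Continuous q) : Continuous fun x => ∑ᶠ y ∈ {y | s.r y x}, q y := by
  simp_rw [s.setOf_rel_eq_preimage_mk] at hfin ⊢
  exact continuous_iff_continuousAt.2 fun x =>
    (hs.continuousAt_finsum_fiber ⟨x, rfl⟩ (hfin x) hq).comp hs.continuous.continuousAt

theorem mul_div_rpow_le_rpow_mul_finsum_mem {X : Type*} {S : Set X} (hS : S.Finite)
    {p h : X → ℝ} (hp : ∀ y, 0 ≤ p y) (hh : ∀ y, 0 ≤ h y) (x : X) {y : X} (hy : y ∈ S)
    (β : ℝ) : p y * (h x / h y) ^ β ≤ h x ^ β * ∑ᶠ z ∈ S, p z * h z ^ (-β) := by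
  have hterm : p y * h y ^ (-β) ≤ ∑ᶠ z ∈ S, p z * h z ^ (-β) := by
    rw [finsum_mem_eq_finite_toFinset_sum _ hS]
    exact Finset.single_le_sum (fun z _ => mul_nonneg (hp z) (Real.rpow_nonneg (hh z) _))
      (hS.mem_toFinset.2 hy)
  calc p y * (h x / h y) ^ β = h x ^ β * (p y * h y ^ (-β)) := by
        rw [Real.rpow_neg (hh y), Real.div_rpow (hh x) (hh y)]; ring
    _ ≤ _ := by have := Real.rpow_nonneg (hh x) β; gcongr

theorem eq_zero_of_forall_rpow_mul_le {c m K : ℝ} (hc : 1 < c) (hm : 0 ≤ m)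
    (hK : ∀ β : ℝ, 0 ≤ β → c ^ β * m ≤ K) : m = 0 := by
  refine hm.eq_or_lt'.resolve_right fun hmpos => ?_
  obtain ⟨n, hn⟩ := pow_unbounded_of_one_lt (K / m) hc
  have hnK := hK n n.cast_nonneg
  rw [Real.rpow_natCast] at hnK
  exact ((div_lt_iff₀ hmpos).1 hn).not_ge hnK

theorem MeasureTheory.measure_eq_zero_of_forall_rpow_le {X : Type*} [MeasurableSpace X]
    {μ : Measure X} [IsFiniteMeasure μ] {F : ℝ → X → ℝ} {U : Set X} {a c K : ℝ}
    (ha : 0 < a) (hc : 1 < c) (hF0 : ∀ β, 0 ≤ β → 0 ≤ F β)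
    (hFint : ∀ β, 0 ≤ β → Integrable (F β) μ)
    (hFU : ∀ β, 0 ≤ β → ∀ x ∈ U, a * c ^ β ≤ F β x)
    (hK : ∀ β, 0 ≤ β → ∫ x, F β x ∂μ ≤ K) : μ U = 0 := by
  suffices a * μ.real U = 0 by simpa [ha.ne', measureReal_eq_zero_iff] using this
  refine eq_zero_of_forall_rpow_mul_le (K := K) hc (by positivity) fun β hβ => ?_
  calc c ^ β * (a * μ.real U) = a * c ^ β * μ.real U := by ring
    _ ≤ a * c ^ β * μ.real {x | a * c ^ β ≤ F β x} := by
      gcongr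
      exacts [measure_ne_top μ _, hFU β hβ]
    _ ≤ ∫ x, F β x ∂μ :=
      mul_meas_ge_le_integral_of_nonneg (ae_of_all _ (hF0 β hβ)) (hFint β hβ) _
    _ ≤ K := hK β hβ

section TwistedTransfer

variable {X : Type*} {s : Setoid X} {p h : X → ℝ}

theorem rpow_mul_finsum_setOf_rel_nonneg (hp : ∀ x, 0 ≤ p x) (hh : ∀ x, 0 ≤ h x) (β : ℝ)
    (x : X) : 0 ≤ h x ^ β * ∑ᶠ y ∈ {y | s.r y x}, p y * h y ^ (-β) :=
  mul_nonneg (Real.rpow_nonneg (hh x) _) (finsum_nonneg fun y => finsum_nonneg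
    fun _ => mul_nonneg (hp y) (Real.rpow_nonneg (hh y) _))

theorem continuous_rpow_mul_finsum_setOf_rel [TopologicalSpace X]
    (hs : IsCoveringMap (Quotient.mk s)) (hfin : ∀ x, {y | s.r y x}.Finite)
    (hp : Continuous p) (hh : Continuous h) (hh0 : ∀ x, h x ≠ 0) (β : ℝ) :
    Continuous fun x => h x ^ β * ∑ᶠ y ∈ {y | s.r y x}, p y * h y ^ (-β) :=
  (hh.rpow_const fun x => .inl (hh0 x)).mul
    (hs.continuous_finsum_setOf_rel hfin (hp.mul (hh.rpow_const fun x => .inl (hh0 x))))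

end TwistedTransfer

theorem stmt15_general {X : Type*} [MetricSpace X] [CompactSpace X]
    [MeasurableSpace X] [BorelSpace X]
    (s : Setoid X)
    (hcover : IsCoveringMap (Quotient.mk s))
    (hfin : ∀ x : X, {y : X | s.r y x}.Finite)
    (p : X → ℝ) (hpcont : Continuous p) (hppos : ∀ x, 0 < p x)
    (h : X → ℝ) (hhcont : Continuous h) (hhpos : ∀ x, 0 < h x)
    (μ : Measure X) [IsProbabilityMeasure μ]
    (K : ℝ)
    (hbound : ∀ β : ℝ, 0 ≤ β →
      ∫ x, (h x ^ β * ∑ᶠ y ∈ {y : X | s.r y x}, p y * h y ^ (-β)) ∂μ ≤ K) :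
    ∀ x : X, x ∉ {x : X | ∀ y : X, s.r x y → h x ≤ h y} →
      ∃ U : Set X, IsOpen U ∧ x ∈ U ∧ μ U = 0 := by
  intro x₀ hx₀
  obtain ⟨y₀, hrel, hlt⟩ : ∃ y₀, s.r x₀ y₀ ∧ h y₀ < h x₀ := by simpa using hx₀
  obtain ⟨c, hc1, hc⟩ := exists_between ((one_lt_div (hhpos y₀)).2 hlt)
  obtain ⟨τ, hτ, hτx₀, hτrel⟩ :=
    hcover.isLocalHomeomorph.exists_fiber_preserving_continuousAt (Quotient.sound hrel)
  have hnear : ∀ᶠ z in 𝓝 x₀, s.r (τ z) z ∧ c < h z / h (τ z) ∧ p y₀ / 2 < p (τ z) := by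
    refine hτrel.mono (fun z hz => Quotient.exact hz) |>.and (.and ?_ ?_)
    · refine (hhcont.continuousAt.div (hhcont.continuousAt.comp hτ) (hhpos _).ne').eventually
        (lt_mem_nhds ?_)
      simpa [hτx₀] using hc
    · refine (hpcont.continuousAt.comp hτ).eventually (lt_mem_nhds ?_)
      simpa [hτx₀] using half_lt_self (hppos y₀)
  obtain ⟨U, hU, hUopen, hx₀U⟩ := eventually_nhds_iff.1 hnear
  refine ⟨U, hUopen, hx₀U, measure_eq_zero_of_forall_rpow_le (half_pos (hppos y₀)) hc1
    (fun β _ => rpow_mul_finsum_setOf_rel_nonneg (fun x => (hppos x).le)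
      (fun x => (hhpos x).le) β)
    (fun β _ => (continuous_rpow_mul_finsum_setOf_rel hcover hfin hpcont hhcont
      (fun x => (hhpos x).ne') β).integrable_of_hasCompactSupport (.of_compactSpace _))
    (fun β _ z hz => ?_) hbound⟩
  obtain ⟨hzrel, hzc, hzp⟩ := hU z hz
  calc p y₀ / 2 * c ^ β ≤ p (τ z) * (h z / h (τ z)) ^ β := by
        have := (hppos (τ z)).le; gcongr
    _ ≤ _ := mul_div_rpow_le_rpow_mul_finsum_mem (hfin z) (fun y => (hppos y).le)
      (fun y => (hhpos y).le) z hzrel β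

/-- with `E^β(f) = h^β E(h^{-β} f)` as before, if a probability
measure `μ` satisfies `sup_{β ≥ 0} ∫ E^β(1) dμ < ∞`, then the support of `μ`
is contained in `M_h^R = {x | ∀ y, x ~ y → h x ≤ h y}`: every point outside
`M_h^R` has an open neighbourhood of `μ`-measure zero. -/
theorem stmt15 {X : Type*} [MetricSpace X] [CompactSpace X]
    [MeasurableSpace X] [BorelSpace X]
    (s : Setoid X)
    (hcover : IsCoveringMap (Quotient.mk s))
    (hfin : ∀ x : X, {y : X | s.r y x}.Finite)
    (p : X → ℝ) (hpcont : Continuous p) (hppos : ∀ x, 0 < p x)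
    (hpnorm : ∀ x : X, ∑ᶠ y ∈ {y : X | s.r y x}, p y = 1)
    (h : X → ℝ) (hhcont : Continuous h) (hhpos : ∀ x, 0 < h x)
    (μ : Measure X) [IsProbabilityMeasure μ]
    (K : ℝ)
    (hbound : ∀ β : ℝ, 0 ≤ β →
      ∫ x, (h x ^ β * ∑ᶠ y ∈ {y : X | s.r y x}, p y * h y ^ (-β)) ∂μ ≤ K) :
    ∀ x : X, x ∉ {x : X | ∀ y : X, s.r x y → h x ≤ h y} →
      ∃ U : Set X, IsOpen U ∧ x ∈ U ∧ μ U = 0 :=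
  stmt15_general s hcover hfin p hpcont hppos h hhcont hhpos μ K hbound
end

section
/- Let T : X → X be continuous on a compact metric space, H : X → (0,∞) continuous, m = sup{∫ -log H dρ : ρ a T-invariant Borel probability}, and V : X → ℝ a continuous function satisfying the sub-cohomological inequality V(T(x)) - V(x) ≥ -log H(x) - m for all x ∈ X. Suppose (y_j)_{j≥0} is a sequence in X with T(y_{j+1}) = y_j and V(T(y_{j+1})) - V(y_{j+1}) = -log H(y_{j+1}) - m for all j. Then any weak-* limit ν of the empirical measures μ_n = (1/n) ∑_{l=0}^{n-1} δ_{y_l} is T-invariant and satisfies ∫ -log H dν = m, i.e. ν is a maximizing measure for -log H. -/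
open MeasureTheory Filter

/-- if `V` satisfies the sub-cohomological inequality
`V(Tx) - V(x) ≥ -log H(x) - m` with `m` the maximal ergodic average of
`-log H`, and `(y_j)` is a backward orbit realizing equality at every step,
then any weak-* limit `ν` of the empirical measures `(1/n) ∑_{l<n} δ_{y_l}`
is `T`-invariant and is a maximizing measure: `∫ -log H dν = m`. -/
theorem stmt17 {X : Type*} [MetricSpace X] [CompactSpace X]
    [MeasurableSpace X] [BorelSpace X]
    (T : X → X) (hTcont : Continuous T)
    (H : X → ℝ) (hHcont : Continuous H) (hHpos : ∀ x, 0 < H x)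
    (m : ℝ)
    (hm : m = sSup {r : ℝ | ∃ ρ : Measure X, IsProbabilityMeasure ρ ∧
      Measure.map T ρ = ρ ∧ r = ∫ x, -Real.log (H x) ∂ρ})
    (V : X → ℝ) (hVcont : Continuous V)
    (hsub : ∀ x : X, -Real.log (H x) - m ≤ V (T x) - V x)
    (y : ℕ → X)
    (hy : ∀ j : ℕ, T (y (j + 1)) = y j)
    (heq : ∀ j : ℕ, V (T (y (j + 1))) - V (y (j + 1)) =
      -Real.log (H (y (j + 1))) - m)
    (ν : Measure X) [IsProbabilityMeasure ν]
    (n : ℕ → ℕ) (hn : StrictMono n) (hn0 : ∀ r, 0 < n r)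
    (hlim : ∀ f : X → ℝ, Continuous f →
      Tendsto (fun r => ((n r : ℝ))⁻¹ * ∑ l ∈ Finset.range (n r), f (y l))
        atTop (nhds (∫ x, f x ∂ν))) :
    Measure.map T ν = ν ∧ ∫ x, -Real.log (H x) ∂ν = m := by
  -- a general bound for continuous functions on a compact space
  have hbd : ∀ f : X → ℝ, Continuous f → ∃ C : ℝ, ∀ x, |f x| ≤ C := by
    intro f hf
    obtain ⟨C, hC⟩ := (isCompact_range hf).isBounded.subset_ball 0
    refine ⟨C, fun x => ?_⟩
    have := hC (Set.mem_range_self x)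
    rw [Metric.mem_ball, Real.dist_eq, sub_zero] at this
    exact this.le
  -- `(n r)⁻¹ → 0`
  have hninf : Tendsto (fun r => ((n r : ℝ))) atTop atTop :=
    tendsto_natCast_atTop_atTop.comp hn.tendsto_atTop
  have hninv : Tendsto (fun r => ((n r : ℝ))⁻¹) atTop (nhds 0) :=
    hninf.inv_tendsto_atTop
  -- Step 1: for every continuous f, ∫ f ∘ T dν = ∫ f dν
  have hInt : ∀ f : X → ℝ, Continuous f → ∫ x, f (T x) ∂ν = ∫ x, f x ∂ν := by
    intro f hf
    obtain ⟨C, hC⟩ := hbd f hf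
    have key : ∀ N : ℕ, ∑ l ∈ Finset.range (N + 1), f (T (y l)) =
        (∑ l ∈ Finset.range (N + 1), f (y l)) + f (T (y 0)) - f (y N) := by
      intro N
      induction N with
      | zero => simp
      | succ N ih =>
        rw [Finset.sum_range_succ, ih, hy N,
          Finset.sum_range_succ (f := fun l => f (y l)) (n := N + 1)]
        linarith
    have hdiff : Tendsto (fun r => ((n r : ℝ))⁻¹ * ∑ l ∈ Finset.range (n r), f (T (y l))
        - ((n r : ℝ))⁻¹ * ∑ l ∈ Finset.range (n r), f (y l)) atTop (nhds 0) := by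
      apply squeeze_zero_norm (a := fun r => (2 * C) * ((n r : ℝ))⁻¹)
      · intro r
        obtain ⟨N, hN⟩ : ∃ N, n r = N + 1 := ⟨n r - 1, (Nat.succ_pred_eq_of_pos (hn0 r)).symm⟩
        rw [hN, key N, Real.norm_eq_abs]
        have h1 : ((N : ℝ) + 1)⁻¹ * ((∑ l ∈ Finset.range (N + 1), f (y l))
            + f (T (y 0)) - f (y N)) - ((N : ℝ) + 1)⁻¹ * ∑ l ∈ Finset.range (N + 1), f (y l)
            = ((N : ℝ) + 1)⁻¹ * (f (T (y 0)) - f (y N)) := by ring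
        push_cast
        rw [h1, abs_mul]
        have hpos : (0 : ℝ) < (N : ℝ) + 1 := by positivity
        have h2 : |f (T (y 0)) - f (y N)| ≤ 2 * C :=
          (abs_sub _ _).trans (by linarith [hC (T (y 0)), hC (y N)])
        have h3 : |((N : ℝ) + 1)⁻¹| = ((N : ℝ) + 1)⁻¹ := abs_of_pos (by positivity)
        rw [h3, mul_comm]
        exact mul_le_mul_of_nonneg_right h2 (by positivity)
      · simpa using hninv.const_mul (2 * C)
    have hfT : Tendsto (fun r => ((n r : ℝ))⁻¹ * ∑ l ∈ Finset.range (n r), f (T (y l)))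
        atTop (nhds (∫ x, f x ∂ν)) := by
      have := (hlim f hf).add hdiff
      simp only [add_zero] at this
      convert this using 2 with r
      ring
    exact tendsto_nhds_unique (hlim (fun x => f (T x)) (hf.comp hTcont)) hfT
  constructor
  · -- invariance
    have : IsProbabilityMeasure (Measure.map T ν) :=
      Measure.isProbabilityMeasure_map hTcont.measurable.aemeasurable
    apply ext_of_forall_lintegral_eq_of_IsFiniteMeasure
    intro f
    have hfc : Continuous fun x => (f x : ℝ) := NNReal.continuous_coe.comp f.continuous
    have hint1 : Integrable (fun x => (f x : ℝ)) ν :=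
      hfc.integrable_of_hasCompactSupport (HasCompactSupport.of_compactSpace _)
    have hint2 : Integrable (fun x => (f (T x) : ℝ)) ν :=
      (hfc.comp hTcont).integrable_of_hasCompactSupport (HasCompactSupport.of_compactSpace _)
    rw [lintegral_map (f.continuous.measurable.coe_nnreal_ennreal) hTcont.measurable,
      lintegral_coe_eq_integral _ hint1, lintegral_coe_eq_integral (fun x => f (T x)) hint2,
      hInt _ hfc]
  · -- the integral equals m
    have hgcont : Continuous fun x => -Real.log (H x) :=
      (hHcont.log fun x => (hHpos x).ne').neg
    obtain ⟨C, hC⟩ := hbd V hVcont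
    have key : ∀ N : ℕ, ∑ l ∈ Finset.range (N + 1), (-Real.log (H (y l))) =
        (-Real.log (H (y 0))) + (V (y 0) - V (y N)) + N * m := by
      intro N
      induction N with
      | zero => simp
      | succ N ih =>
        have h := heq N
        rw [hy N] at h
        rw [Finset.sum_range_succ, ih]
        push_cast
        linarith
    have hmlim : Tendsto (fun r => ((n r : ℝ))⁻¹ * ∑ l ∈ Finset.range (n r),
        (-Real.log (H (y l)))) atTop (nhds m) := by
      have h0 : Tendsto (fun r => ((n r : ℝ))⁻¹ * ∑ l ∈ Finset.range (n r),
          (-Real.log (H (y l))) - m) atTop (nhds 0) := by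
        apply squeeze_zero_norm
          (a := fun r => (|(-Real.log (H (y 0))) + V (y 0)| + C + |m|) * ((n r : ℝ))⁻¹)
        · intro r
          obtain ⟨N, hN⟩ : ∃ N, n r = N + 1 := ⟨n r - 1, (Nat.succ_pred_eq_of_pos (hn0 r)).symm⟩
          rw [hN, key N, Real.norm_eq_abs]
          have hpos : (0 : ℝ) < (N : ℝ) + 1 := by positivity
          have h1 : ((N : ℝ) + 1)⁻¹ * ((-Real.log (H (y 0))) + (V (y 0) - V (y N)) + N * m) - m
              = ((N : ℝ) + 1)⁻¹ * (((-Real.log (H (y 0))) + V (y 0)) - V (y N) - m) := by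
            field_simp
            ring
          push_cast
          rw [h1, abs_mul, abs_of_pos (a := ((N : ℝ) + 1)⁻¹) (by positivity), mul_comm]
          have h2 : |((-Real.log (H (y 0))) + V (y 0)) - V (y N) - m|
              ≤ |(-Real.log (H (y 0))) + V (y 0)| + C + |m| := by
            have := hC (y N)
            calc |((-Real.log (H (y 0))) + V (y 0)) - V (y N) - m|
                ≤ |((-Real.log (H (y 0))) + V (y 0)) - V (y N)| + |m| := abs_sub _ _
              _ ≤ |(-Real.log (H (y 0))) + V (y 0)| + |V (y N)| + |m| := by
                  linarith [abs_sub ((-Real.log (H (y 0))) + V (y 0)) (V (y N))]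
              _ ≤ _ := by linarith
          exact mul_le_mul_of_nonneg_right h2 (by positivity)
        · simpa using hninv.const_mul (|(-Real.log (H (y 0))) + V (y 0)| + C + |m|)
      have := h0.add (tendsto_const_nhds (x := m))
      simpa using this
    exact tendsto_nhds_unique (hlim _ hgcont) hmlim
end
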